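/- arXiv:1602.06178 — 6 statements merged into one kernel-verified Lean document; each statement's English description precedes it below -/
import Mathlib

section
/- For all real parameters α and β, the functions φ¹(x,y) = (1/√2)(−y + √(x²+y²)) + (α/2)x² and φ²(x,y) = (1/√2)(y + √(x²+y²)) + (β/2)x², defined on the open right half-plane {(x,y) : x > 0}, each satisfy the degenerate-elliptic moment PDE x(∂²φ/∂x² + ∂²φ/∂y²) − ∂φ/∂x = 0. -/
open Real

/-- The generalized Taub-NUT moment function `φ¹` in volumetric normal coordinates. -/
noncomputable def phi1 (α : ℝ) (x y : ℝ) : ℝ :=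
  (1 / Real.sqrt 2) * (-y + Real.sqrt (x ^ 2 + y ^ 2)) + (α / 2) * x ^ 2

/-- The generalized Taub-NUT moment function `φ²` in volumetric normal coordinates. -/
noncomputable def phi2 (β : ℝ) (x y : ℝ) : ℝ :=
  (1 / Real.sqrt 2) * (y + Real.sqrt (x ^ 2 + y ^ 2)) + (β / 2) * x ^ 2

/-- A function `φ` on the open right half-plane `{x > 0}` satisfies the degenerate-elliptic
moment PDE `x (φ_xx + φ_yy) - φ_x = 0`. -/
def SatisfiesMomentPDE (φ : ℝ → ℝ → ℝ) : Prop :=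
  ∀ x y : ℝ, 0 < x →
    x * (deriv (deriv (fun t => φ t y)) x + deriv (deriv (fun t => φ x t)) y)
      - deriv (fun t => φ t y) x = 0

/-!
The operator `φ ↦ x (φ_xx + φ_yy) - φ_x` is linear and kills each of `r = √(x² + y²)`,
`y` and `x²`: for `r` one has `Δr = 1/r` and `r_x = x/r`, and for `x²` one has `Δ(x²) = 2`
and `∂ₓ(x²) = 2x`. Both `φ¹` and `φ²` are combinations `c r + b y + (a/2) x²`.
-/

open Filter Topology

lemma hasDerivAt_sqrt_sq_add_sq {t : ℝ} (b : ℝ) (h : t ^ 2 + b ^ 2 ≠ 0) :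
    HasDerivAt (fun u => √(u ^ 2 + b ^ 2)) (t / √(t ^ 2 + b ^ 2)) t := by
  have hsq : HasDerivAt (fun u => u ^ 2 + b ^ 2) (2 * t) t := by
    simpa using (hasDerivAt_pow 2 t).add_const (b ^ 2)
  convert hsq.sqrt h using 1
  field_simp

lemma hasDerivAt_div_sqrt_sq_add_sq {t : ℝ} (b : ℝ) (h : 0 < t ^ 2 + b ^ 2) :
    HasDerivAt (fun u => u / √(u ^ 2 + b ^ 2)) (b ^ 2 / √(t ^ 2 + b ^ 2) ^ 3) t := by
  have hr : √(t ^ 2 + b ^ 2) ≠ 0 := (sqrt_pos.mpr h).ne'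
  refine ((hasDerivAt_id' t).fun_div (hasDerivAt_sqrt_sq_add_sq b h.ne') hr).congr_deriv ?_
  field_simp
  rw [sq_sqrt h.le]
  ring

lemma satisfiesMomentPDE_of_hasDerivAt {φ φx φy φxx φyy : ℝ → ℝ → ℝ}
    (hx : ∀ x y, 0 < x → HasDerivAt (φ · y) (φx x y) x)
    (hxx : ∀ x y, 0 < x → HasDerivAt (φx · y) (φxx x y) x)
    (hy : ∀ x y, 0 < x → HasDerivAt (φ x ·) (φy x y) y)
    (hyy : ∀ x y, 0 < x → HasDerivAt (φy x ·) (φyy x y) y)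
    (hpde : ∀ x y, 0 < x → x * (φxx x y + φyy x y) - φx x y = 0) :
    SatisfiesMomentPDE φ := by
  intro x y hx₀
  have hφx : deriv (φ · y) =ᶠ[𝓝 x] (φx · y) :=
    (eventually_gt_nhds hx₀).mono fun t ht => (hx t y ht).deriv
  have hφy : deriv (φ x ·) = (φy x ·) := funext fun t => (hy x t hx₀).deriv
  rw [hφx.deriv_eq, hφy, (hxx x y hx₀).deriv, (hyy x y hx₀).deriv, (hx x y hx₀).deriv]
  exact hpde x y hx₀

lemma satisfiesMomentPDE_sqrt_add_linear_add_sq (c b a : ℝ) :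
    SatisfiesMomentPDE fun x y => c * √(x ^ 2 + y ^ 2) + b * y + a / 2 * x ^ 2 := by
  refine satisfiesMomentPDE_of_hasDerivAt
    (φx := fun x y => c * (x / √(x ^ 2 + y ^ 2)) + a * x)
    (φy := fun x y => c * (y / √(y ^ 2 + x ^ 2)) + b)
    (φxx := fun x y => c * (y ^ 2 / √(x ^ 2 + y ^ 2) ^ 3) + a)
    (φyy := fun x y => c * (x ^ 2 / √(y ^ 2 + x ^ 2) ^ 3))
    (fun x y hx => ?_) (fun x y hx => ?_) (fun x y hx => ?_) (fun x y hx => ?_) (fun x y hx => ?_)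
  · exact (((hasDerivAt_sqrt_sq_add_sq y (by positivity)).const_mul c).add_const (b * y)).add
      (((hasDerivAt_pow 2 x).const_mul (a / 2)).congr_deriv (by ring))
  · exact ((hasDerivAt_div_sqrt_sq_add_sq y (by positivity)).const_mul c).add
      ((hasDerivAt_id' x).const_mul a |>.congr_deriv (mul_one a))
  · have := ((hasDerivAt_sqrt_sq_add_sq x (by positivity)).const_mul c).add
      ((hasDerivAt_id' y).const_mul b)
    simp_rw [add_comm (x ^ 2)]
    simpa using this.add_const (a / 2 * x ^ 2)
  · exact ((hasDerivAt_div_sqrt_sq_add_sq x (by positivity)).const_mul c).add_const b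
  · have hxy : 0 < x ^ 2 + y ^ 2 := by positivity
    have hr : 0 < √(x ^ 2 + y ^ 2) := sqrt_pos.mpr hxy
    rw [add_comm (y ^ 2)]
    field_simp
    linear_combination -(x * c) * sq_sqrt hxy.le

/-- For all real parameters `α`, `β`, the generalized Taub-NUT moment functions
satisfy the degenerate-elliptic moment PDE on the open right half-plane. -/
theorem stmt_0 (α β : ℝ) :
    SatisfiesMomentPDE (phi1 α) ∧ SatisfiesMomentPDE (phi2 β) := by
  have h₁ : phi1 α = fun x y => 1 / √2 * √(x ^ 2 + y ^ 2) + -(1 / √2) * y + α / 2 * x ^ 2 := by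
    funext x y
    rw [phi1]
    ring
  have h₂ : phi2 β = fun x y => 1 / √2 * √(x ^ 2 + y ^ 2) + 1 / √2 * y + β / 2 * x ^ 2 := by
    funext x y
    rw [phi2]
    ring
  rw [h₁, h₂]
  exact ⟨satisfiesMomentPDE_sqrt_add_linear_add_sq _ _ _,
    satisfiesMomentPDE_sqrt_add_linear_add_sq _ _ _⟩
end

section
/- Let M > 0, k ∈ (−1,1), and R > 0. Then the volume of the almost-ball AB(R) of the generalized Taub-NUT instanton, computed as the iterated integral 4π² · ∫₀^{π/2} ∫₀^{R} (2√2/M)·(1 + √(√2·M)·ρ·(√(1+k)·cos²ψ + √(1−k)·sin²ψ))·(ρ·cos ψ·sin ψ / √((1+k)(1−k))) dρ dψ, equals (2√2·π²/(M·√((1+k)(1−k))))·( R² + (1/3)·(√(1+k) + √(1−k))·√(√2·M)·R³ ). In particular the volume of almost-balls grows cubically in R. -/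
/-!
In almost-polar coordinates the integrand splits as `ρ (1 + c ρ)` in the radius times
`sin ψ cos ψ (p + q (a cos² ψ + b sin² ψ))` in the angle. The radial integral is a polynomial
in `R`, and the angular one has the elementary antiderivative
`p sin² ψ / 2 + q (b sin⁴ ψ - a cos⁴ ψ) / 4`.
-/

open Real intervalIntegral

theorem integral_mul_one_add_mul (c R : ℝ) :
    ∫ ρ in (0 : ℝ)..R, ρ * (1 + c * ρ) = R ^ 2 / 2 + c * R ^ 3 / 3 := by
  simp only [mul_add, mul_one, mul_left_comm _ c, ← sq]
  rw [integral_add intervalIntegrable_id ((intervalIntegrable_pow 2).const_mul c),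
    integral_const_mul, integral_id, integral_pow]
  ring

theorem integral_sin_mul_cos_mul_add_cos_sq_add_sin_sq (p q a b : ℝ) :
    ∫ ψ in (0 : ℝ)..(π / 2), sin ψ * cos ψ * (p + q * (a * cos ψ ^ 2 + b * sin ψ ^ 2))
      = p / 2 + q * (a + b) / 4 := by
  have hderiv : ∀ ψ, HasDerivAt
      (fun x => p * sin x ^ 2 / 2 + q * (b * sin x ^ 4 - a * cos x ^ 4) / 4)
      (sin ψ * cos ψ * (p + q * (a * cos ψ ^ 2 + b * sin ψ ^ 2))) ψ := by
    intro ψ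
    refine (((((hasDerivAt_sin ψ).pow 2).const_mul p).div_const 2).add
      ((((((hasDerivAt_sin ψ).pow 4).const_mul b).sub
        (((hasDerivAt_cos ψ).pow 4).const_mul a)).const_mul q).div_const 4)).congr_deriv ?_
    push_cast
    ring
  rw [integral_eq_sub_of_hasDerivAt (fun ψ _ => hderiv ψ)
    (by apply Continuous.intervalIntegrable; fun_prop)]
  simp only [sin_pi_div_two, cos_pi_div_two, sin_zero, cos_zero]
  ring

theorem stmt_9_general (M k R : ℝ) :
    4 * Real.pi ^ 2 *
      ∫ ψ in (0 : ℝ)..(Real.pi / 2), ∫ ρ in (0 : ℝ)..R,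
        (2 * Real.sqrt 2 / M) *
          (1 + Real.sqrt (Real.sqrt 2 * M) * ρ *
            (Real.sqrt (1 + k) * Real.cos ψ ^ 2 + Real.sqrt (1 - k) * Real.sin ψ ^ 2)) *
          (ρ * Real.cos ψ * Real.sin ψ / Real.sqrt ((1 + k) * (1 - k)))
    = (2 * Real.sqrt 2 * Real.pi ^ 2 / (M * Real.sqrt ((1 + k) * (1 - k)))) *
        (R ^ 2 + (1 / 3) * (Real.sqrt (1 + k) + Real.sqrt (1 - k))
          * Real.sqrt (Real.sqrt 2 * M) * R ^ 3) := by
  set A := 2 * √2 / M / √((1 + k) * (1 - k))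
  set S := √(√2 * M)
  have radial : ∀ ψ, ∫ ρ in (0 : ℝ)..R, 2 * √2 / M *
        (1 + S * ρ * (√(1 + k) * cos ψ ^ 2 + √(1 - k) * sin ψ ^ 2)) *
        (ρ * cos ψ * sin ψ / √((1 + k) * (1 - k)))
      = A * (sin ψ * cos ψ * (R ^ 2 / 2 +
          S * R ^ 3 / 3 * (√(1 + k) * cos ψ ^ 2 + √(1 - k) * sin ψ ^ 2))) := by
    intro ψ
    set w := √(1 + k) * cos ψ ^ 2 + √(1 - k) * sin ψ ^ 2
    calc _ = ∫ ρ in (0 : ℝ)..R, A * (sin ψ * cos ψ) * (ρ * (1 + S * w * ρ)) := by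
          congr 1 with ρ; ring
      _ = _ := by rw [integral_const_mul, integral_mul_one_add_mul]; ring
  simp_rw [radial]
  rw [integral_const_mul, integral_sin_mul_cos_mul_add_cos_sq_add_sin_sq]
  ring

/-- The volume of the almost-ball `AB(R)` of the generalized Taub-NUT instanton,
computed as an iterated integral in almost-polar coordinates, is explicitly
`(2√2 π²/(M √((1+k)(1-k)))) (R² + ⅓(√(1+k)+√(1-k)) √(√2 M) R³)`; in particular it grows
cubically in `R`. -/
theorem stmt_9 (M k R : ℝ) (hM : 0 < M) (hk : k ∈ Set.Ioo (-1 : ℝ) 1) (hR : 0 < R) :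
    4 * Real.pi ^ 2 *
      ∫ ψ in (0 : ℝ)..(Real.pi / 2), ∫ ρ in (0 : ℝ)..R,
        (2 * Real.sqrt 2 / M) *
          (1 + Real.sqrt (Real.sqrt 2 * M) * ρ *
            (Real.sqrt (1 + k) * Real.cos ψ ^ 2 + Real.sqrt (1 - k) * Real.sin ψ ^ 2)) *
          (ρ * Real.cos ψ * Real.sin ψ / Real.sqrt ((1 + k) * (1 - k)))
    = (2 * Real.sqrt 2 * Real.pi ^ 2 / (M * Real.sqrt ((1 + k) * (1 - k)))) *
        (R ^ 2 + (1 / 3) * (Real.sqrt (1 + k) + Real.sqrt (1 - k))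
          * Real.sqrt (Real.sqrt 2 * M) * R ^ 3) :=
  stmt_9_general M k R
end

section
/- Let k ∈ (−1,1). Then the integral of the Ricci pseudo-volume form over the open first quadrant, multiplied by 4π², satisfies 4π² · ∫₀^∞ ∫₀^∞ 8k²uv/(1 + (1+k)u² + (1−k)v²)³ du dv = 4π²k²/(1−k²). In particular, the L² norm of the Ricci curvature of the generalized Taub-NUT instanton of chirality k equals 4π²k²/(1−k²). -/
open Real MeasureTheory

/-!
Both integrations are elementary: `u / (a + b u²)^(n+1)` has the antiderivative
`-1 / (2 n b (a + b u²)^n)`, which vanishes at infinity. Integrating out `u` and then `v` gives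
`∫∫ u v / (1 + b u² + c v²)³ = 1 / (8 b c)`, and with `b = 1 + k`, `c = 1 - k` the factor
`8 k²` turns this into `k² / (1 - k²)`.
-/

open Filter Set Topology

lemma hasDerivAt_inv_add_mul_sq_pow (n : ℕ) {a b : ℝ} (ha : 0 < a) (hb : 0 ≤ b) (u : ℝ) :
    HasDerivAt (fun u : ℝ => ((a + b * u ^ 2) ^ n)⁻¹)
      (-(2 * n * b) * (u / (a + b * u ^ 2) ^ (n + 1))) u := by
  have hpos : 0 < a + b * u ^ 2 := by positivity
  have hq : HasDerivAt (fun u : ℝ => a + b * u ^ 2) (b * (2 * u)) u := by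
    simpa using ((hasDerivAt_pow 2 u).const_mul b).const_add a
  refine ((hq.pow n).inv (pow_ne_zero n hpos.ne')).congr_deriv ?_
  rcases n with _ | n
  · simp
  · simp only [Pi.pow_apply, Nat.add_sub_cancel]
    field_simp
    ring

theorem integral_Ioi_div_add_mul_sq_pow_succ {n : ℕ} (hn : n ≠ 0) {a b : ℝ} (ha : 0 < a)
    (hb : 0 < b) :
    ∫ u in Ioi 0, u / (a + b * u ^ 2) ^ (n + 1) = 1 / (2 * n * b * a ^ n) := by
  have hc : (2 * n * b : ℝ) ≠ 0 := by positivity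
  set F : ℝ → ℝ := fun u => -((a + b * u ^ 2) ^ n)⁻¹ / (2 * n * b)
  have hF : ∀ u, HasDerivAt F (u / (a + b * u ^ 2) ^ (n + 1)) u := fun u =>
    (((hasDerivAt_inv_add_mul_sq_pow n ha hb.le u).neg).div_const (2 * n * b)).congr_deriv
      (by field_simp)
  have hF_top : Tendsto F atTop (𝓝 0) := by
    have hq : Tendsto (fun u : ℝ => a + b * u ^ 2) atTop atTop :=
      tendsto_atTop_add_const_left _ _ ((tendsto_pow_atTop two_ne_zero).const_mul_atTop hb)
    simpa using ((tendsto_pow_atTop hn).comp hq).inv_tendsto_atTop.neg.div_const (2 * n * b)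
  have hnonneg : ∀ u ∈ Ioi (0 : ℝ), 0 ≤ u / (a + b * u ^ 2) ^ (n + 1) := fun u hu => by
    have : 0 < u := hu
    positivity
  rw [integral_Ioi_of_hasDerivAt_of_nonneg (hF 0).continuousAt.continuousWithinAt
    (fun u _ => hF u) hnonneg hF_top]
  simp only [F, zero_sub, neg_div, neg_neg, zero_pow two_ne_zero, mul_zero, add_zero]
  field_simp

theorem integral_Ioi_mul_div_one_add_sq_add_sq_pow_three {b c : ℝ} (hb : 0 < b) (hc : 0 ≤ c)
    (v : ℝ) :
    ∫ u in Ioi 0, u * v / (1 + b * u ^ 2 + c * v ^ 2) ^ 3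
      = v / (1 + c * v ^ 2) ^ 2 / (4 * b) := by
  have ha : 0 < 1 + c * v ^ 2 := by positivity
  have hswap : ∀ u : ℝ, u * v / (1 + b * u ^ 2 + c * v ^ 2) ^ 3
      = v * (u / ((1 + c * v ^ 2) + b * u ^ 2) ^ (2 + 1)) := fun u => by ring
  simp_rw [hswap]
  rw [integral_const_mul, integral_Ioi_div_add_mul_sq_pow_succ two_ne_zero ha hb]
  field_simp
  ring

theorem integral_Ioi_integral_Ioi_mul_div_one_add_sq_add_sq_pow_three {b c : ℝ} (hb : 0 < b)
    (hc : 0 < c) :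
    ∫ v in Ioi 0, ∫ u in Ioi 0, u * v / (1 + b * u ^ 2 + c * v ^ 2) ^ 3 = 1 / (8 * b * c) := by
  simp_rw [integral_Ioi_mul_div_one_add_sq_add_sq_pow_three hb hc.le, integral_div,
    integral_Ioi_div_add_mul_sq_pow_succ one_ne_zero one_pos hc]
  field_simp
  ring

/-- The integral of the Ricci pseudo-volume form of the generalized Taub-NUT instanton of
chirality `k` over the first quadrant, multiplied by `4π²` (the total angular volume),
equals `4π²k²/(1-k²)`: this is the L² norm of the Ricci curvature. -/
theorem stmt_11 (k : ℝ) (hk : k ∈ Set.Ioo (-1 : ℝ) 1) :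
    4 * Real.pi ^ 2 *
      ∫ v in Set.Ioi (0 : ℝ), ∫ u in Set.Ioi (0 : ℝ),
        8 * k ^ 2 * u * v / (1 + (1 + k) * u ^ 2 + (1 - k) * v ^ 2) ^ 3
    = 4 * Real.pi ^ 2 * k ^ 2 / (1 - k ^ 2) := by
  obtain ⟨hk₁, hk₂⟩ := hk
  have hpull : ∀ v : ℝ,
      ∫ u in Ioi 0, 8 * k ^ 2 * u * v / (1 + (1 + k) * u ^ 2 + (1 - k) * v ^ 2) ^ 3
        = 8 * k ^ 2 * ∫ u in Ioi 0, u * v / (1 + (1 + k) * u ^ 2 + (1 - k) * v ^ 2) ^ 3 := by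
    intro v
    rw [← integral_const_mul]
    simp_rw [mul_div_assoc, mul_assoc]
  simp_rw [hpull, integral_const_mul,
    integral_Ioi_integral_Ioi_mul_div_one_add_sq_add_sq_pow_three (by linarith : 0 < 1 + k)
      (by linarith : 0 < 1 - k)]
  have h : (1 - k ^ 2 : ℝ) = (1 + k) * (1 - k) := by ring
  rw [h]
  field_simp
end

section
/- For all (u,v) ∈ ℝ², the Gauss curvature of the conformal metric (1+u²)(du²+dv²) satisfies −(1/(2(1+u²)))·(∂²/∂u² + ∂²/∂v²) log(1+u²) = −(1−u²)/(1+u²)³. In particular this curvature equals −1 at every point of the axis u = 0, so the sectional curvature of the exceptional Taub-NUT along the totally geodesic locus u = 0 does not decay, while for fixed v it decays like u^{−4} as u → ∞. -/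
open Real Filter

theorem hasDerivAt_log_one_add_sq (t : ℝ) :
    HasDerivAt (fun t : ℝ => log (1 + t ^ 2)) (2 * t / (1 + t ^ 2)) t := by
  have h : HasDerivAt (fun t : ℝ => 1 + t ^ 2) (2 * t) t := by
    simpa using (hasDerivAt_pow 2 t).const_add 1
  simpa using h.log (by positivity)

theorem deriv_log_one_add_sq :
    deriv (fun t : ℝ => log (1 + t ^ 2)) = fun t => 2 * t / (1 + t ^ 2) :=
  funext fun t => (hasDerivAt_log_one_add_sq t).deriv

theorem deriv_deriv_log_one_add_sq (u : ℝ) :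
    deriv (deriv fun t : ℝ => log (1 + t ^ 2)) u = 2 * (1 - u ^ 2) / (1 + u ^ 2) ^ 2 := by
  have hnum : HasDerivAt (fun t : ℝ => 2 * t) 2 u := by
    simpa using (hasDerivAt_id u).const_mul (2 : ℝ)
  have hden : HasDerivAt (fun t : ℝ => 1 + t ^ 2) (2 * u) u := by
    simpa using (hasDerivAt_pow 2 u).const_add 1
  have hquot : HasDerivAt (fun t : ℝ => 2 * t / (1 + t ^ 2))
      ((2 * (1 + u ^ 2) - 2 * u * (2 * u)) / (1 + u ^ 2) ^ 2) u :=
    hnum.div hden (by positivity)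
  rw [deriv_log_one_add_sq, hquot.deriv]
  ring

theorem tendsto_pow_four_mul_neg_one_sub_sq_div :
    Tendsto (fun u : ℝ => u ^ 4 * (-(1 - u ^ 2) / (1 + u ^ 2) ^ 3)) atTop (nhds 1) := by
  have hcont : ContinuousAt (fun s : ℝ => (1 - s) / (1 + s) ^ 3) 0 :=
    ContinuousAt.div (by fun_prop) (by fun_prop) (by norm_num)
  have hs : Tendsto (fun u : ℝ => (u ^ 2)⁻¹) atTop (nhds 0) :=
    (tendsto_pow_atTop two_ne_zero).inv_tendsto_atTop
  have hlim : Tendsto (fun s : ℝ => (1 - s) / (1 + s) ^ 3) (nhds 0) (nhds 1) := by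
    simpa using hcont.tendsto
  -- `u⁴ (u² - 1) / (1 + u²)³ = (1 - s) / (1 + s)³` with `s = u⁻²`
  refine (hlim.comp hs).congr' ?_
  filter_upwards [eventually_ne_atTop (0 : ℝ)] with u hu
  simp only [Function.comp_apply]
  field_simp
  ring

/-- The Gauss curvature of the exceptional Taub-NUT polytope metric `(1+u²)(du²+dv²)`
equals `-(1-u²)/(1+u²)³`; in particular it equals `-1` along the totally geodesic locus
`u = 0` (no curvature decay), while for fixed `v` it decays like `u⁻⁴` as `u → ∞`. -/
theorem stmt_14 :
    (∀ u v : ℝ,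
      -(1 / (2 * (1 + u ^ 2))) *
          (deriv (deriv (fun t => Real.log (1 + t ^ 2))) u
            + deriv (deriv (fun _ : ℝ => Real.log (1 + u ^ 2))) v)
        = -(1 - u ^ 2) / (1 + u ^ 2) ^ 3) ∧
    (-(1 - (0 : ℝ) ^ 2) / (1 + (0 : ℝ) ^ 2) ^ 3 = -1) ∧
    Tendsto (fun u : ℝ => u ^ 4 * (-(1 - u ^ 2) / (1 + u ^ 2) ^ 3)) atTop (nhds 1) := by
  refine ⟨fun u v => ?_, by norm_num, tendsto_pow_four_mul_neg_one_sub_sq_div⟩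
  rw [deriv_deriv_log_one_add_sq, deriv_const', deriv_const', add_zero]
  field_simp
end

section
/- Let η ∈ (0,π/2) and u > 0, and set v = sin η·log( u/cos η + √(1 + u²/cos²η) ), R = (1/2)·u·√(cos²η + u²) + (v/2)·(1+sin²η)/sin η, and R̃ = u²/2 + v. If R̃ > 100, then 1 ≤ R/R̃ ≤ 2. -/
open Real

/-! Writing `s = sin η`, `c = cos η`, the geodesic has `v = s · arsinh (u / c)`. The lower bound
`R̃ ≤ R` is `u ≤ √(c² + u²)` together with `2s ≤ 1 + s²`. For the upper bound, `√(c² + u²) ≤ u + c`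
reduces `R ≤ 2R̃` to `u c + a (1 + s²) ≤ u² + 4 s a` with `a = arsinh (u / c)`. When `s ≥ 1/2` the
`a`-terms alone leave a surplus `3a/4`, which absorbs `u c` unless `u ≥ 1`, where `u c ≤ u²`. When
`s < 1/2`, `c` is close to `1`, so `a ≤ u / c` is at most a constant times `u`, while `R̃ > 100`
forces `u` to be large. -/

lemma Real.arsinh_le_self {x : ℝ} (hx : 0 ≤ x) : arsinh x ≤ x := by
  rw [← sinh_le_sinh, sinh_arsinh]
  exact self_le_sinh_iff.2 hx

lemma Real.sqrt_sq_add_sq_le_add {x y : ℝ} (hx : 0 ≤ x) (hy : 0 ≤ y) :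
    √(x ^ 2 + y ^ 2) ≤ x + y :=
  sqrt_le_iff.2 ⟨by positivity, by nlinarith [mul_nonneg hx hy]⟩

/-- The distance `R` from the origin along the geodesic with `sin η = s`, `cos η = c`. -/
noncomputable def geodesicDist (s c u v : ℝ) : ℝ :=
  1 / 2 * u * √(c ^ 2 + u ^ 2) + v / 2 * (1 + s ^ 2) / s

noncomputable def almostDist (u v : ℝ) : ℝ := u ^ 2 / 2 + v

section

variable {s c u a : ℝ}

lemma geodesicDist_sin_mul (hs : 0 < s) :
    geodesicDist s c u (s * a) = (u * √(c ^ 2 + u ^ 2) + a * (1 + s ^ 2)) / 2 := by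
  unfold geodesicDist
  field_simp

lemma almostDist_le_geodesicDist (hs : 0 < s) (hu : 0 ≤ u) (ha : 0 ≤ a) :
    almostDist u (s * a) ≤ geodesicDist s c u (s * a) := by
  have hsqrt : u ≤ √(c ^ 2 + u ^ 2) := le_sqrt_of_sq_le (by nlinarith [sq_nonneg c])
  rw [geodesicDist_sin_mul hs, almostDist]
  nlinarith [mul_le_mul_of_nonneg_left hsqrt hu, mul_nonneg ha (sq_nonneg (1 - s))]

lemma mul_add_le_of_half_le_sin (hs : 1 / 2 ≤ s) (hs1 : s ≤ 1) (hc1 : c ≤ 1) (hu : 0 < u)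
    (ha : 0 ≤ a) (h : 100 < almostDist u (s * a)) :
    u * c + a * (1 + s ^ 2) ≤ u ^ 2 + 4 * s * a := by
  unfold almostDist at h
  have hsurplus : a * (1 + s ^ 2) + 3 / 4 * a ≤ 4 * s * a := by
    nlinarith [mul_nonneg ha (show 0 ≤ (s - 1 / 2) * (7 / 2 - s) by nlinarith)]
  rcases le_or_gt 1 u with hu1 | hu1
  · nlinarith [mul_le_mul_of_nonneg_left (hc1.trans hu1) hu.le]
  · have hs_a : s * a ≤ a := by nlinarith
    nlinarith [mul_le_mul_of_nonneg_left hc1 hu.le]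

lemma mul_add_le_of_sin_lt_half (hs0 : 0 ≤ s) (hs : s < 1 / 2) (hc : 0 < c)
    (hsc : s ^ 2 + c ^ 2 = 1) (hu : 0 < u) (ha0 : 0 ≤ a) (ha : a ≤ u / c)
    (h : 100 < almostDist u (s * a)) :
    u * c + a * (1 + s ^ 2) ≤ u ^ 2 + 4 * s * a := by
  unfold almostDist at h
  have hc_big : 5 / 6 < c := by nlinarith
  have ha_le : a ≤ 6 / 5 * u := by
    rw [le_div_iff₀ hc] at ha
    nlinarith
  have hsa : s * a ≤ 3 / 5 * u := by nlinarith
  have hu_big : 3 < u := by nlinarith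
  have hc1 : c ≤ 1 := by nlinarith
  nlinarith [mul_le_mul_of_nonneg_left hc1 hu.le, mul_nonneg hs0 ha0]

lemma geodesicDist_le_two_mul_almostDist (hs : 0 < s) (hc : 0 < c) (hsc : s ^ 2 + c ^ 2 = 1)
    (hu : 0 < u) (ha0 : 0 ≤ a) (ha : a ≤ u / c) (h : 100 < almostDist u (s * a)) :
    geodesicDist s c u (s * a) ≤ 2 * almostDist u (s * a) := by
  have hsqrt := mul_le_mul_of_nonneg_left (sqrt_sq_add_sq_le_add hc.le hu.le) hu.le
  have hkey : u * c + a * (1 + s ^ 2) ≤ u ^ 2 + 4 * s * a := by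
    rcases le_or_gt (1 / 2) s with hs2 | hs2
    · exact mul_add_le_of_half_le_sin hs2 (by nlinarith) (by nlinarith) hu ha0 h
    · exact mul_add_le_of_sin_lt_half hs.le hs2 hc hsc hu ha0 ha h
  rw [geodesicDist_sin_mul hs, almostDist]
  nlinarith
end

/-- Along the geodesic of the exceptional Taub-NUT with initial angle `η`, the almost
distance function `R̃ = u²/2 + v` approximates the true distance
`R = ½u√(cos²η+u²) + (v/2)(1+sin²η)/sin η` to within a factor of 2 once `R̃ > 100`. -/
theorem stmt_17 (η u : ℝ) (hη : η ∈ Set.Ioo 0 (Real.pi / 2)) (hu : 0 < u) :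
    let v := Real.sin η *
      Real.log (u / Real.cos η + Real.sqrt (1 + u ^ 2 / Real.cos η ^ 2))
    let R := (1 / 2) * u * Real.sqrt (Real.cos η ^ 2 + u ^ 2)
      + (v / 2) * (1 + Real.sin η ^ 2) / Real.sin η
    let Rt := u ^ 2 / 2 + v
    100 < Rt → 1 ≤ R / Rt ∧ R / Rt ≤ 2 := by
  intro v R Rt hRt
  obtain ⟨hη0, hη2⟩ := hη
  have hs : 0 < sin η := sin_pos_of_pos_of_lt_pi hη0 (by linarith [pi_pos])
  have hc : 0 < cos η := cos_pos_of_mem_Ioo ⟨by linarith [pi_pos], hη2⟩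
  have hx : 0 ≤ u / cos η := by positivity
  have hv : v = sin η * arsinh (u / cos η) := by simp only [v, arsinh, div_pow]
  change 100 < almostDist u v at hRt
  change 1 ≤ geodesicDist (sin η) (cos η) u v / almostDist u v ∧
    geodesicDist (sin η) (cos η) u v / almostDist u v ≤ 2
  rw [hv] at hRt ⊢
  have hpos : 0 < almostDist u (sin η * arsinh (u / cos η)) := by linarith
  constructor
  · rw [le_div_iff₀ hpos, one_mul]
    exact almostDist_le_geodesicDist hs hu.le (arsinh_nonneg_iff.2 hx)
  · rw [div_le_iff₀ hpos]
    exact geodesicDist_le_two_mul_almostDist hs hc (sin_sq_add_cos_sq η) hu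
      (arsinh_nonneg_iff.2 hx) (arsinh_le_self hx) hRt
end

section
/- For every T > 0, the volume of the almost-ball of radius T of the exceptional Taub-NUT instanton satisfies 4π² · ∫₀^{√(2T)} ( ∫₀^{T − u²/2} (1/2)·u·v·(1+u²) dv ) du = (π²/6)·(T⁴ + 2T³). In particular the volume of almost-balls, and hence of geodesic balls, grows quartically: Vol B(R) = O(R⁴). -/
open Real intervalIntegral

/-!
The inner integral is elementary, `∫₀ᵇ v dv = b²/2`. For the outer one, substitute
`w = T - u²/2`: then `u du = -dw` and `1 + u² = 1 + 2T - 2w`, so the integrand has the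
polynomial antiderivative `w ↦ w⁴/8 - (1 + 2T) w³/12` in `w`, which vanishes at the
boundary `u = √(2T)` of the almost-ball.
-/

lemma integral_half_mul_mul_mul_one_add_sq (u b : ℝ) :
    ∫ v in (0 : ℝ)..b, (1 / 2) * u * v * (1 + u ^ 2) = u * (1 + u ^ 2) * b ^ 2 / 4 := by
  have hfactor : (fun v : ℝ => (1 / 2) * u * v * (1 + u ^ 2))
      = fun v => ((1 / 2) * u * (1 + u ^ 2)) * v := by
    funext v; ring
  rw [hfactor, integral_const_mul, integral_id]
  ring

noncomputable def almostBallPrimitive (T w : ℝ) : ℝ :=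
  w ^ 4 / 8 - (1 + 2 * T) * w ^ 3 / 12

lemma hasDerivAt_almostBallPrimitive (T w : ℝ) :
    HasDerivAt (almostBallPrimitive T) (w ^ 3 / 2 - (1 + 2 * T) * w ^ 2 / 4) w := by
  have h : HasDerivAt (fun x : ℝ => x ^ 4 / 8 - (1 + 2 * T) * x ^ 3 / 12) _ w :=
    ((hasDerivAt_pow 4 w).div_const 8).sub
      (((hasDerivAt_pow 3 w).const_mul (1 + 2 * T)).div_const 12)
  exact h.congr_deriv (by norm_num; ring)

lemma hasDerivAt_almostBallPrimitive_comp (T u : ℝ) :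
    HasDerivAt (fun u => almostBallPrimitive T (T - u ^ 2 / 2))
      (u * (1 + u ^ 2) * (T - u ^ 2 / 2) ^ 2 / 4) u := by
  have hw : HasDerivAt (fun u : ℝ => T - u ^ 2 / 2) (-u) u := by
    simpa using ((hasDerivAt_pow 2 u).div_const 2).const_sub T
  exact ((hasDerivAt_almostBallPrimitive T _).comp u hw).congr_deriv (by ring)

lemma integral_almostBall_outer (T a : ℝ) :
    ∫ u in (0 : ℝ)..a, u * (1 + u ^ 2) * (T - u ^ 2 / 2) ^ 2 / 4
      = almostBallPrimitive T (T - a ^ 2 / 2) - almostBallPrimitive T T := by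
  rw [integral_eq_sub_of_hasDerivAt (fun u _ => hasDerivAt_almostBallPrimitive_comp T u)
    (by apply Continuous.intervalIntegrable; fun_prop)]
  norm_num

/-- The volume of the almost-ball of radius `T` of the exceptional Taub-NUT instanton,
computed as an iterated integral of the volume density `½uv(1+u²)` (times the angular
volume `4π²`) over `{u,v ≥ 0, v + u²/2 ≤ T}`, equals `(π²/6)(T⁴ + 2T³)`; in particular
the volume of geodesic balls grows quartically. -/
theorem stmt_18 (T : ℝ) (hT : 0 < T) :
    4 * Real.pi ^ 2 *
      ∫ u in (0 : ℝ)..(Real.sqrt (2 * T)),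
        ∫ v in (0 : ℝ)..(T - u ^ 2 / 2), (1 / 2) * u * v * (1 + u ^ 2)
    = (Real.pi ^ 2 / 6) * (T ^ 4 + 2 * T ^ 3) := by
  simp_rw [integral_half_mul_mul_mul_one_add_sq]
  rw [integral_almostBall_outer, Real.sq_sqrt (by positivity), almostBallPrimitive,
    almostBallPrimitive]
  ring
end
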